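/- arXiv:1709.06848 — 4 statements merged into one kernel-verified Lean document; each statement's English description precedes it below -/
import Mathlib

section
/- If a random vector X in R^n (n ≥ 2) satisfies E|X|^2 = n, then Var(|X|) ≤ σ_4^2, and moreover (1/4) σ_2^2 ≤ Var(|X|) ≤ σ_2 √n. -/
open MeasureTheory ProbabilityTheory Real
open scoped RealInnerProductSpace NNReal ENNReal ProbabilityTheory

/-- The Kolmogorov distance `ρ(U,V) = sup_x |U x - V x|` between two
(distribution) functions on the real line. -/
noncomputable def kolDist (U V : ℝ → ℝ) : ℝ := ⨆ x : ℝ, |U x - V x|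

/-- The standard normal distribution function `Φ`. -/
noncomputable def stdNormalCDF (x : ℝ) : ℝ :=
  ∫ y in Set.Iic x, Real.exp (-(y ^ 2) / 2) / Real.sqrt (2 * Real.pi)

/-- `μ` is the uniform (i.e. rotation-invariant) probability measure on the unit
sphere `S^{n-1}`, viewed as a measure on the ambient Euclidean space which is
supported on the sphere. -/
def IsUniformOnSphere {n : ℕ} (μ : Measure (EuclideanSpace ℝ (Fin n))) : Prop :=
  IsProbabilityMeasure μ ∧ μ (Metric.sphere 0 1) = 1 ∧
    ∀ T : EuclideanSpace ℝ (Fin n) ≃ₗᵢ[ℝ] EuclideanSpace ℝ (Fin n), μ.map T = μ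

/-- The distribution function `F_θ` of the weighted sum `S_θ = ⟨X, θ⟩`. -/
noncomputable def weightedCDF {n : ℕ} {Ω : Type} [MeasureSpace Ω]
    (X : Ω → EuclideanSpace ℝ (Fin n)) (θ : EuclideanSpace ℝ (Fin n)) (x : ℝ) : ℝ :=
  (ℙ {ω | ⟪X ω, θ⟫ ≤ x}).toReal

/-- The characteristic function `f_θ` of the weighted sum `S_θ = ⟨X, θ⟩`. -/
noncomputable def weightedCharFn {n : ℕ} {Ω : Type} [MeasureSpace Ω]
    (X : Ω → EuclideanSpace ℝ (Fin n)) (θ : EuclideanSpace ℝ (Fin n)) (t : ℝ) : ℂ :=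
  ∫ ω, Complex.exp (Complex.I * ((t * ⟪X ω, θ⟫ : ℝ) : ℂ))

/-- The typical distribution function `F = E_θ F_θ`. -/
noncomputable def typicalCDF {n : ℕ} {Ω : Type} [MeasureSpace Ω]
    (X : Ω → EuclideanSpace ℝ (Fin n)) (μ : Measure (EuclideanSpace ℝ (Fin n)))
    (x : ℝ) : ℝ :=
  ∫ θ, weightedCDF X θ x ∂μ

/-- The characteristic function `f = E_θ f_θ` of the typical distribution. -/
noncomputable def typicalCharFn {n : ℕ} {Ω : Type} [MeasureSpace Ω]
    (X : Ω → EuclideanSpace ℝ (Fin n)) (μ : Measure (EuclideanSpace ℝ (Fin n)))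
    (t : ℝ) : ℂ :=
  ∫ θ, weightedCharFn X θ t ∂μ

/-!
Write `r = |X|` and `s = √n`. Since the variance minimises the mean squared deviation,
`Var r ≤ E (r - s)²`, and for `r, s ≥ 0` one has pointwise `(r - s)² ≤ |r² - n|` and
`n (r - s)² ≤ (r² - n)²`; integrating gives the two upper bounds. For the lower bound,
`|r² - n| = (r + s) |r - s|`, and Cauchy–Schwarz together with
`E (r + s)² · E (r - s)² = (2n + 2s E r)(2n - 2s E r) = 4n Var r` gives `(E |r² - n|)² ≤ 4n Var r`.
-/

theorem sq_integral_mul_le_integral_sq_mul_integral_sq {α : Type*} [MeasurableSpace α]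
    {μ : Measure α} {f g : α → ℝ} (hf : MemLp f 2 μ) (hg : MemLp g 2 μ) :
    (∫ a, f a * g a ∂μ) ^ 2 ≤ (∫ a, f a ^ 2 ∂μ) * ∫ a, g a ^ 2 ∂μ := by
  have hfg : Integrable (fun a => f a * g a) μ := hf.integrable_mul hg
  have hquad : ∀ t : ℝ, 0 ≤ (∫ a, f a ^ 2 ∂μ) * (t * t) + 2 * (∫ a, f a * g a ∂μ) * t +
      ∫ a, g a ^ 2 ∂μ := fun t =>
    calc (0 : ℝ) ≤ ∫ a, (t * f a + g a) ^ 2 ∂μ := integral_nonneg fun a => sq_nonneg _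
      _ = ∫ a, ((t * t) * f a ^ 2 + (2 * t) * (f a * g a) + g a ^ 2) ∂μ := by
        congr 1; ext a; ring
      _ = _ := by
        have hf2 := hf.integrable_sq
        have hg2 := hg.integrable_sq
        rw [integral_add (by fun_prop) hg2, integral_add (by fun_prop) (by fun_prop),
          integral_const_mul, integral_const_mul]
        ring
  have := discrim_le_zero hquad
  rw [discrim] at this
  linarith

section

variable {x c : ℝ}

lemma abs_sq_sub_sq_eq_add_mul_abs_sub (hx : 0 ≤ x) (hc : 0 ≤ c) :
    |x ^ 2 - c ^ 2| = (x + c) * |x - c| := by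
  rw [sq_sub_sq, abs_mul, abs_of_nonneg (add_nonneg hx hc)]

lemma sq_sub_le_abs_sq_sub_sq (hx : 0 ≤ x) (hc : 0 ≤ c) : (x - c) ^ 2 ≤ |x ^ 2 - c ^ 2| := by
  rw [abs_sq_sub_sq_eq_add_mul_abs_sub hx hc, ← sq_abs, sq]
  have : |x - c| ≤ x + c := abs_sub_le_iff.2 ⟨by linarith, by linarith⟩
  exact mul_le_mul_of_nonneg_right this (abs_nonneg _)

lemma sq_mul_sq_sub_le_sq_sq_sub_sq (hx : 0 ≤ x) (hc : 0 ≤ c) :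
    c ^ 2 * (x - c) ^ 2 ≤ (x ^ 2 - c ^ 2) ^ 2 := by
  rw [sq_sub_sq, mul_pow]
  gcongr
  linarith

end

section

variable {Ω : Type*} [MeasurableSpace Ω] {μ : Measure Ω} [IsProbabilityMeasure μ] {R : Ω → ℝ}

lemma variance_le_integral_sub_const_sq (hR : AEStronglyMeasurable R μ) (c : ℝ) :
    Var[R; μ] ≤ ∫ ω, (R ω - c) ^ 2 ∂μ := by
  rw [← variance_sub_const hR c]
  exact variance_le_expectation_sq (by fun_prop)

lemma integral_add_const_sq (hR : MemLp R 2 μ) (c : ℝ) :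
    ∫ ω, (R ω + c) ^ 2 ∂μ = ∫ ω, R ω ^ 2 ∂μ + 2 * c * ∫ ω, R ω ∂μ + c ^ 2 := by
  have hR1 : Integrable R μ := hR.integrable one_le_two
  calc ∫ ω, (R ω + c) ^ 2 ∂μ = ∫ ω, (R ω ^ 2 + (2 * c) * R ω + c ^ 2) ∂μ := by
        congr 1; ext ω; ring
    _ = _ := by
      have hR2 := hR.integrable_sq
      rw [integral_add (by fun_prop) (by fun_prop), integral_add hR2 (by fun_prop),
        integral_const_mul]
      simp

lemma integral_add_const_sq_mul_integral_sub_const_sq (hR : MemLp R 2 μ) (c : ℝ) :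
    (∫ ω, (R ω + c) ^ 2 ∂μ) * ∫ ω, (R ω - c) ^ 2 ∂μ =
      4 * c ^ 2 * Var[R; μ] + (∫ ω, R ω ^ 2 ∂μ - c ^ 2) ^ 2 := by
  simp_rw [sub_eq_add_neg (R _) c]
  rw [integral_add_const_sq hR, integral_add_const_sq hR, variance_eq_sub hR]
  simp only [Pi.pow_apply]
  ring

lemma variance_le_integral_abs_sq_sub_sq {c : ℝ} (hR : MemLp R 2 μ) (hR0 : 0 ≤ᵐ[μ] R)
    (hc : 0 ≤ c) :
    Var[R; μ] ≤ ∫ ω, |R ω ^ 2 - c ^ 2| ∂μ := by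
  have hR2 := hR.integrable_sq
  calc Var[R; μ] ≤ ∫ ω, (R ω - c) ^ 2 ∂μ := variance_le_integral_sub_const_sq hR.1 c
    _ ≤ ∫ ω, |R ω ^ 2 - c ^ 2| ∂μ := by
      refine integral_mono_of_nonneg (ae_of_all _ fun ω => sq_nonneg _) (by fun_prop) ?_
      filter_upwards [hR0] with ω hω
      exact sq_sub_le_abs_sq_sub_sq hω hc

lemma sq_mul_variance_le_variance_sq {c : ℝ} (hR : AEStronglyMeasurable R μ) (hR0 : 0 ≤ᵐ[μ] R)
    (hc : 0 ≤ c) (hR2 : MemLp (fun ω => R ω ^ 2) 2 μ) (hm : ∫ ω, R ω ^ 2 ∂μ = c ^ 2) :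
    c ^ 2 * Var[R; μ] ≤ Var[fun ω => R ω ^ 2; μ] := by
  rw [variance_eq_integral hR2.1.aemeasurable, hm]
  calc c ^ 2 * Var[R; μ] ≤ c ^ 2 * ∫ ω, (R ω - c) ^ 2 ∂μ := by
        gcongr; exact variance_le_integral_sub_const_sq hR c
    _ = ∫ ω, c ^ 2 * (R ω - c) ^ 2 ∂μ := (integral_const_mul _ _).symm
    _ ≤ ∫ ω, (R ω ^ 2 - c ^ 2) ^ 2 ∂μ := by
      refine integral_mono_of_nonneg (ae_of_all _ fun ω => by positivity)
        (hR2.sub (memLp_const _)).integrable_sq ?_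
      filter_upwards [hR0] with ω hω
      exact sq_mul_sq_sub_le_sq_sq_sub_sq hω hc

lemma sq_integral_abs_sq_sub_sq_le_variance {c : ℝ} (hR : MemLp R 2 μ) (hR0 : 0 ≤ᵐ[μ] R)
    (hc : 0 ≤ c) (hm : ∫ ω, R ω ^ 2 ∂μ = c ^ 2) :
    (∫ ω, |R ω ^ 2 - c ^ 2| ∂μ) ^ 2 ≤ 4 * c ^ 2 * Var[R; μ] := by
  have hfactor : ∫ ω, |R ω ^ 2 - c ^ 2| ∂μ = ∫ ω, (R ω + c) * |R ω - c| ∂μ := by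
    refine integral_congr_ae ?_
    filter_upwards [hR0] with ω hω
    exact abs_sq_sub_sq_eq_add_mul_abs_sub hω hc
  calc (∫ ω, |R ω ^ 2 - c ^ 2| ∂μ) ^ 2
      ≤ (∫ ω, (R ω + c) ^ 2 ∂μ) * ∫ ω, |R ω - c| ^ 2 ∂μ := by
        rw [hfactor]
        exact sq_integral_mul_le_integral_sq_mul_integral_sq (hR.add (memLp_const c))
          (hR.sub (memLp_const c)).abs
    _ = 4 * c ^ 2 * Var[R; μ] := by
      simp only [sq_abs]
      rw [integral_add_const_sq_mul_integral_sub_const_sq hR, hm]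
      ring

end

theorem stmt6 (n : ℕ) (hn : 2 ≤ n)
    (Ω : Type) [MeasureSpace Ω] [IsProbabilityMeasure (ℙ : Measure Ω)]
    (X : Ω → EuclideanSpace ℝ (Fin n)) (hX : Measurable X)
    (hnorm : (∫ ω, ‖X ω‖ ^ 2) = (n : ℝ)) :
    ((Integrable fun ω => ‖X ω‖ ^ 4) →
      variance (fun ω => ‖X ω‖) ℙ ≤ (n : ℝ)⁻¹ * variance (fun ω => ‖X ω‖ ^ 2) ℙ) ∧
    (1 / 4) * ((Real.sqrt n)⁻¹ * ∫ ω, |‖X ω‖ ^ 2 - (n : ℝ)|) ^ 2 ≤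
      variance (fun ω => ‖X ω‖) ℙ ∧
    variance (fun ω => ‖X ω‖) ℙ ≤
      ((Real.sqrt n)⁻¹ * ∫ ω, |‖X ω‖ ^ 2 - (n : ℝ)|) * Real.sqrt n := by
  have hn0 : (0 : ℝ) < n := by exact_mod_cast (by omega : 0 < n)
  have hsqrt : Real.sqrt n ^ 2 = n := Real.sq_sqrt hn0.le
  have hm : ∫ ω, ‖X ω‖ ^ 2 = Real.sqrt n ^ 2 := by rw [hsqrt, hnorm]
  have hr0 : 0 ≤ᵐ[ℙ] fun ω => ‖X ω‖ := ae_of_all _ fun ω => norm_nonneg _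
  have hr : AEStronglyMeasurable (fun ω => ‖X ω‖) ℙ := hX.norm.aestronglyMeasurable
  have hL2 : MemLp (fun ω => ‖X ω‖) 2 ℙ := (memLp_two_iff_integrable_sq hr).2
    (.of_integral_ne_zero (by rw [hnorm]; exact hn0.ne'))
  refine ⟨fun h4 => ?_, ?_, ?_⟩
  · have hL4 : MemLp (fun ω => ‖X ω‖ ^ 2) 2 ℙ :=
      (memLp_two_iff_integrable_sq (by fun_prop)).2 (by simpa only [← pow_mul] using h4)
    rw [le_inv_mul_iff₀ hn0, ← hsqrt]
    exact sq_mul_variance_le_variance_sq hr hr0 (sqrt_nonneg n) hL4 hm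
  · have hlower := sq_integral_abs_sq_sub_sq_le_variance hL2 hr0 (sqrt_nonneg n) hm
    rw [hsqrt] at hlower
    rw [mul_pow, inv_pow, hsqrt, inv_mul_eq_div]
    have : (∫ ω, |‖X ω‖ ^ 2 - (n : ℝ)|) ^ 2 / n ≤ 4 * variance (fun ω => ‖X ω‖) ℙ := by
      rw [div_le_iff₀ hn0]; linarith
    linarith
  · rw [mul_comm, mul_inv_cancel_left₀ (Real.sqrt_pos.2 hn0).ne']
    simpa only [hsqrt] using variance_le_integral_abs_sq_sub_sq hL2 hr0 (sqrt_nonneg n)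
end

section
/- Let Y be an independent copy of a random vector X in R^n (n ≥ 2) with E|X|^2 = n. For all p, q ≥ 1, P{ |X − Y|^2 ≤ n/4 } ≤ 4^q m_q^q / n^{q/2} + 4^{2p} σ_{2p}^{2p} / n^p. In particular, P{ |X − Y|^2 ≤ n/4 } ≤ C / n^p with C = 4^{2p} (m_{2p}^{2p} + σ_{2p}^{2p}). -/
open MeasureTheory ProbabilityTheory Real
open scoped RealInnerProductSpace NNReal ENNReal ProbabilityTheory

/-!
Expanding `‖X - Y‖² = ‖X‖² + ‖Y‖² - 2⟪X, Y⟫` shows that `‖X - Y‖² ≤ n/4` forces either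
`|⟪X, Y⟫| ≥ n/4`, or `‖X‖² < 3n/4` and `‖Y‖² < 3n/4`, i.e. both `|‖X‖²/n - 1|` and
`|‖Y‖²/n - 1|` are at least `1/4`. By independence and equal distribution the second event has
probability `P{|‖X‖²/n - 1| ≥ 1/4}²`, and Markov's inequality for `|⟪X, Y⟫|^q` and
`|‖X‖²/n - 1|^p` turns the two probabilities into the moments `m_q^q` and `σ_{2p}^{2p}`.
-/

theorem measureReal_abs_ge_le_integral_rpow_div {α : Type*} [MeasurableSpace α] {μ : Measure α}
    {g : α → ℝ} {a r : ℝ} (ha : 0 < a) (hr : 0 < r)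
    (hint : Integrable (fun x => |g x| ^ r) μ) :
    μ.real {x | a ≤ |g x|} ≤ (∫ x, |g x| ^ r ∂μ) / a ^ r := by
  have hset : {x | a ≤ |g x|} = {x | a ^ r ≤ |g x| ^ r} := by
    ext x
    simp only [Set.mem_ofPred_eq, rpow_le_rpow_iff ha.le (abs_nonneg _) hr]
  rw [le_div_iff₀ (by positivity), mul_comm, hset]
  exact mul_meas_ge_le_integral_of_nonneg (ae_of_all _ fun x => by positivity) hint _

theorem inv_sqrt_mul_rpow_inv_rpow_div {n E r : ℝ} (hn : 0 < n) (hE : 0 ≤ E) (hr : r ≠ 0) :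
    ((√n)⁻¹ * E ^ r⁻¹) ^ r / n ^ (r / 2) = E / n ^ r := by
  have hsqrt : √n ^ r = n ^ (r / 2) := by
    rw [sqrt_eq_rpow, ← rpow_mul hn.le, one_div_mul_eq_div]
  have hhalves : n ^ r = n ^ (r / 2) * n ^ (r / 2) := by
    rw [← rpow_add hn, add_halves]
  rw [mul_rpow (by positivity) (by positivity), ← rpow_mul hE, inv_mul_cancel₀ hr, rpow_one,
    inv_rpow (sqrt_nonneg n), hsqrt, hhalves]
  field_simp

theorem sqrt_mul_rpow_inv_rpow_div {n E p : ℝ} (hn : 0 < n) (hE : 0 ≤ E) (hp : p ≠ 0) :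
    (√n * E ^ p⁻¹) ^ (2 * p) / n ^ p = E ^ 2 := by
  have hsqrt : √n ^ (2 * p) = n ^ p := by
    rw [sqrt_eq_rpow, ← rpow_mul hn.le]
    ring_nf
  have hE2 : (E ^ p⁻¹) ^ (2 * p) = E ^ 2 := by
    rw [← rpow_mul hE, inv_mul_eq_div, mul_div_cancel_right₀ _ hp, rpow_two]
  rw [mul_rpow (sqrt_nonneg n) (by positivity), hsqrt, hE2]
  field_simp

section InnerProductSpace

variable {E : Type*} [NormedAddCommGroup E] [InnerProductSpace ℝ E]

theorem norm_sq_add_norm_sq_lt_of_norm_sub_sq_le {x y : E} {c : ℝ} (h : ‖x - y‖ ^ 2 ≤ c)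
    (hxy : |⟪x, y⟫| < c) : ‖x‖ ^ 2 + ‖y‖ ^ 2 < 3 * c := by
  rw [norm_sub_sq_real] at h
  linarith [le_abs_self ⟪x, y⟫]

theorem le_abs_inner_or_of_norm_sub_sq_le {n : ℝ} (hn : 0 < n) {x y : E}
    (h : ‖x - y‖ ^ 2 ≤ n / 4) :
    n / 4 ≤ |⟪x, y⟫| ∨ (1 / 4 ≤ |‖x‖ ^ 2 / n - 1| ∧ 1 / 4 ≤ |‖y‖ ^ 2 / n - 1|) := by
  refine or_iff_not_imp_left.2 fun hxy => ?_
  have hsum := norm_sq_add_norm_sq_lt_of_norm_sub_sq_le h (not_le.1 hxy)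
  have quarter_le : ∀ z : E, ‖z‖ ^ 2 < 3 * (n / 4) → 1 / 4 ≤ |‖z‖ ^ 2 / n - 1| := by
    intro z hz
    have : ‖z‖ ^ 2 / n < 3 / 4 := by rw [div_lt_iff₀ hn]; linarith
    exact le_abs.2 (Or.inr (by linarith))
  exact ⟨quarter_le x (by linarith [sq_nonneg ‖y‖]), quarter_le y (by linarith [sq_nonneg ‖x‖])⟩

variable [MeasurableSpace E] [OpensMeasurableSpace E]
  {Ω : Type*} [MeasurableSpace Ω] {μ : Measure Ω} [IsFiniteMeasure μ] {X Y : Ω → E}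

theorem measureReal_norm_sub_sq_le_le_add_sq {n : ℝ} (hn : 0 < n)
    (hX : Measurable X) (hY : Measurable Y) (hindep : IndepFun X Y μ)
    (hid : μ.map X = μ.map Y) :
    μ.real {ω | ‖X ω - Y ω‖ ^ 2 ≤ n / 4} ≤
      μ.real {ω | n / 4 ≤ |⟪X ω, Y ω⟫|} + μ.real {ω | 1 / 4 ≤ |‖X ω‖ ^ 2 / n - 1|} ^ 2 := by
  set S : Set E := {v | 1 / 4 ≤ |‖v‖ ^ 2 / n - 1|}
  have hS : MeasurableSet S := measurableSet_le measurable_const (by fun_prop)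
  have hYS : μ (Y ⁻¹' S) = μ (X ⁻¹' S) := by
    rw [← Measure.map_apply hY hS, ← Measure.map_apply hX hS, hid]
  have hsq : μ.real (X ⁻¹' S ∩ Y ⁻¹' S) = μ.real (X ⁻¹' S) ^ 2 := by
    rw [measureReal_def, hindep.measure_inter_preimage_eq_mul S S hS hS, hYS,
      ENNReal.toReal_mul, sq, measureReal_def]
  calc μ.real {ω | ‖X ω - Y ω‖ ^ 2 ≤ n / 4}
      ≤ μ.real ({ω | n / 4 ≤ |⟪X ω, Y ω⟫|} ∪ (X ⁻¹' S ∩ Y ⁻¹' S)) :=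
        measureReal_mono fun ω hω => le_abs_inner_or_of_norm_sub_sq_le hn hω
    _ ≤ μ.real {ω | n / 4 ≤ |⟪X ω, Y ω⟫|} + μ.real (X ⁻¹' S ∩ Y ⁻¹' S) :=
        measureReal_union_le _ _
    _ = _ := by rw [hsq]; rfl

theorem measureReal_norm_sub_sq_le_le_moments {n p q : ℝ} (hn : 0 < n)
    (hX : Measurable X) (hY : Measurable Y) (hindep : IndepFun X Y μ)
    (hid : μ.map X = μ.map Y) (hp : 0 < p) (hq : 0 < q)
    (hintq : Integrable (fun ω => |⟪X ω, Y ω⟫| ^ q) μ)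
    (hintσ : Integrable (fun ω => |‖X ω‖ ^ 2 / n - 1| ^ p) μ) :
    μ.real {ω | ‖X ω - Y ω‖ ^ 2 ≤ n / 4} ≤
      (4 : ℝ) ^ q * ((√n)⁻¹ * (∫ ω, |⟪X ω, Y ω⟫| ^ q ∂μ) ^ q⁻¹) ^ q / n ^ (q / 2) +
        (4 : ℝ) ^ (2 * p) * (√n * (∫ ω, |‖X ω‖ ^ 2 / n - 1| ^ p ∂μ) ^ p⁻¹) ^ (2 * p) /
          n ^ p := by
  set Mq := ∫ ω, |⟪X ω, Y ω⟫| ^ q ∂μ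
  set Mp := ∫ ω, |‖X ω‖ ^ 2 / n - 1| ^ p ∂μ
  have hMq : 0 ≤ Mq := integral_nonneg fun ω => by positivity
  have hMp : 0 ≤ Mp := integral_nonneg fun ω => by positivity
  rw [mul_div_assoc, inv_sqrt_mul_rpow_inv_rpow_div hn hMq hq.ne', mul_div_assoc,
    sqrt_mul_rpow_inv_rpow_div hn hMp hp.ne']
  refine (measureReal_norm_sub_sq_le_le_add_sq hn hX hY hindep hid).trans (add_le_add ?_ ?_)
  · calc _ ≤ Mq / (n / 4) ^ q :=
          measureReal_abs_ge_le_integral_rpow_div (by positivity) hq hintq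
      _ = 4 ^ q * (Mq / n ^ q) := by
          rw [div_rpow hn.le (by norm_num)]
          field_simp
  · calc _ ≤ (Mp / (1 / 4) ^ p) ^ 2 := pow_le_pow_left₀ measureReal_nonneg
          (measureReal_abs_ge_le_integral_rpow_div (by norm_num) hp hintσ) 2
      _ = 4 ^ (2 * p) * Mp ^ 2 := by
          rw [one_div, inv_rpow (by norm_num), div_inv_eq_mul, mul_comm 2 p,
            rpow_mul (by norm_num), rpow_two]
          ring

end InnerProductSpace

theorem stmt7_general (n : ℕ) (hn : 2 ≤ n)
    (Ω : Type) [MeasureSpace Ω] [IsProbabilityMeasure (ℙ : Measure Ω)]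
    (X Y : Ω → EuclideanSpace ℝ (Fin n)) (hX : Measurable X) (hY : Measurable Y)
    (hindep : IndepFun X Y ℙ) (hid : Measure.map X ℙ = Measure.map Y ℙ)
    (p q : ℝ) (hp : 1 ≤ p) (hq : 1 ≤ q)
    (hintq : Integrable fun ω => |⟪X ω, Y ω⟫| ^ q)
    (hint2p : Integrable fun ω => |⟪X ω, Y ω⟫| ^ (2 * p))
    (hintσ : Integrable fun ω => |‖X ω‖ ^ 2 / (n : ℝ) - 1| ^ p) :
    (ℙ {ω | ‖X ω - Y ω‖ ^ 2 ≤ (n : ℝ) / 4}).toReal ≤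
        (4 : ℝ) ^ q * ((Real.sqrt n)⁻¹ * (∫ ω, |⟪X ω, Y ω⟫| ^ q) ^ q⁻¹) ^ q /
            (n : ℝ) ^ (q / 2) +
          (4 : ℝ) ^ (2 * p) *
            (Real.sqrt n * (∫ ω, |‖X ω‖ ^ 2 / (n : ℝ) - 1| ^ p) ^ p⁻¹) ^ (2 * p) /
            (n : ℝ) ^ p ∧
    (ℙ {ω | ‖X ω - Y ω‖ ^ 2 ≤ (n : ℝ) / 4}).toReal ≤
        (4 : ℝ) ^ (2 * p) *
          (((Real.sqrt n)⁻¹ * (∫ ω, |⟪X ω, Y ω⟫| ^ (2 * p)) ^ (2 * p)⁻¹) ^ (2 * p) +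
            (Real.sqrt n * (∫ ω, |‖X ω‖ ^ 2 / (n : ℝ) - 1| ^ p) ^ p⁻¹) ^ (2 * p)) /
          (n : ℝ) ^ p := by
  have hn0 : (0 : ℝ) < n := by exact_mod_cast (by omega : 0 < n)
  rw [← measureReal_def]
  refine ⟨measureReal_norm_sub_sq_le_le_moments hn0 hX hY hindep hid (by linarith) (by linarith)
    hintq hintσ, ?_⟩
  have h2p := measureReal_norm_sub_sq_le_le_moments hn0 hX hY hindep hid (by linarith)
    (by linarith) hint2p hintσ
  rwa [show 2 * p / 2 = p by ring, ← add_div, ← mul_add] at h2p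

theorem stmt7 (n : ℕ) (hn : 2 ≤ n)
    (Ω : Type) [MeasureSpace Ω] [IsProbabilityMeasure (ℙ : Measure Ω)]
    (X Y : Ω → EuclideanSpace ℝ (Fin n)) (hX : Measurable X) (hY : Measurable Y)
    (hindep : IndepFun X Y ℙ) (hid : Measure.map X ℙ = Measure.map Y ℙ)
    (hnorm : (∫ ω, ‖X ω‖ ^ 2) = (n : ℝ))
    (p q : ℝ) (hp : 1 ≤ p) (hq : 1 ≤ q)
    (hintq : Integrable fun ω => |⟪X ω, Y ω⟫| ^ q)
    (hint2p : Integrable fun ω => |⟪X ω, Y ω⟫| ^ (2 * p))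
    (hintσ : Integrable fun ω => |‖X ω‖ ^ 2 / (n : ℝ) - 1| ^ p) :
    (ℙ {ω | ‖X ω - Y ω‖ ^ 2 ≤ (n : ℝ) / 4}).toReal ≤
        (4 : ℝ) ^ q * ((Real.sqrt n)⁻¹ * (∫ ω, |⟪X ω, Y ω⟫| ^ q) ^ q⁻¹) ^ q /
            (n : ℝ) ^ (q / 2) +
          (4 : ℝ) ^ (2 * p) *
            (Real.sqrt n * (∫ ω, |‖X ω‖ ^ 2 / (n : ℝ) - 1| ^ p) ^ p⁻¹) ^ (2 * p) /
            (n : ℝ) ^ p ∧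
    (ℙ {ω | ‖X ω - Y ω‖ ^ 2 ≤ (n : ℝ) / 4}).toReal ≤
        (4 : ℝ) ^ (2 * p) *
          (((Real.sqrt n)⁻¹ * (∫ ω, |⟪X ω, Y ω⟫| ^ (2 * p)) ^ (2 * p)⁻¹) ^ (2 * p) +
            (Real.sqrt n * (∫ ω, |‖X ω‖ ^ 2 / (n : ℝ) - 1| ^ p) ^ p⁻¹) ^ (2 * p)) /
          (n : ℝ) ^ p :=
  stmt7_general n hn Ω X Y hX hY hindep hid p q hp hq hintq hint2p hintσ
end

section
/- There is a universal constant C > 0 such that for every n ≥ 3 and all x ∈ R, |φ_n(x) − φ(x)| ≤ (C/n) e^{−x^2/8}, where φ_n is the probability density of Z_n = √n θ_1 with θ uniformly distributed on the unit sphere S^{n-1}, and φ(x) = (2π)^{-1/2} e^{−x^2/2} is the standard normal density. -/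
/-! The density is `c_n K_n(x)` with `K_n(x) = (1 - x²/n)_+^{(n-3)/2}`. Log-convexity of `Γ`
(Gautschi's inequality at `s = (n-1)/2`) puts `c_n` within `O(1/n)` of `1/√(2π)`. On `x² ≤ n/2`,
`log (1 - u) = -u + O(u²)` makes the exponents of `K_n(x)` and `e^{-x²/2}` differ by
`O((x⁴ + x²)/n)`, and the factor `e^{-x²/4}` absorbs the polynomial. On `x² > n/2` both functions
are at most `e^{-x²/4} ≤ (16/n) e^{-x²/8}`, and for `n < 6` only a bounded range of `x` is left. -/

open MeasureTheory ProbabilityTheory Real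
open scoped RealInnerProductSpace NNReal ENNReal ProbabilityTheory

namespace Real

theorem Gamma_midpoint_sq_le {s t : ℝ} (hs : 0 < s) (ht : 0 < t) :
    Gamma ((s + t) / 2) ^ 2 ≤ Gamma s * Gamma t := by
  have h := Gamma_mul_add_mul_le_rpow_Gamma_mul_rpow_Gamma hs ht (a := 1 / 2) (b := 1 / 2)
    one_half_pos one_half_pos (by norm_num)
  rw [← sqrt_eq_rpow, ← sqrt_eq_rpow, ← sqrt_mul (Gamma_pos_of_pos hs).le] at h
  calc Gamma ((s + t) / 2) ^ 2 = Gamma (1 / 2 * s + 1 / 2 * t) ^ 2 := by ring_nf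
    _ ≤ √(Gamma s * Gamma t) ^ 2 := by gcongr
    _ = Gamma s * Gamma t := sq_sqrt (by positivity)

theorem Gamma_add_half_sq_le {s : ℝ} (hs : 0 < s) :
    Gamma (s + 1 / 2) ^ 2 ≤ s * Gamma s ^ 2 := by
  have h := Gamma_midpoint_sq_le hs (by linarith : 0 < s + 1)
  rw [Gamma_add_one hs.ne', show (s + (s + 1)) / 2 = s + 1 / 2 by ring] at h
  linarith

theorem sq_mul_Gamma_sq_le_Gamma_add_half_sq {s : ℝ} (hs : 0 < s) :
    s ^ 2 * Gamma s ^ 2 ≤ (s + 1 / 2) * Gamma (s + 1 / 2) ^ 2 := by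
  have h := Gamma_midpoint_sq_le (by linarith : 0 < s + 1 / 2) (by linarith : 0 < s + 3 / 2)
  rw [show (s + 1 / 2 + (s + 3 / 2)) / 2 = s + 1 by ring, Gamma_add_one hs.ne',
    show s + 3 / 2 = s + 1 / 2 + 1 by ring, Gamma_add_one (by linarith)] at h
  linarith

theorem neg_sub_two_mul_sq_le_log_one_sub {u : ℝ} (hu : u ≤ 1 / 2) :
    -u - 2 * u ^ 2 ≤ log (1 - u) := by
  have hpos : 0 < 1 - u := by linarith
  have hinv : (1 - u)⁻¹ ≤ 1 + u + 2 * u ^ 2 := by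
    rw [inv_le_iff_one_le_mul₀ hpos]
    nlinarith [sq_nonneg u]
  linarith [one_sub_inv_le_log_of_pos hpos]

theorem abs_mul_log_one_sub_add_mul_le {u p q : ℝ} (hu₀ : 0 ≤ u) (hu : u ≤ 1 / 2)
    (hp : 0 ≤ p) (hpq : p ≤ q) :
    |p * log (1 - u) + q * u| ≤ (q - p) * u + 2 * q * u ^ 2 := by
  have hupper : log (1 - u) ≤ -u := by
    linarith [log_le_sub_one_of_pos (by linarith : 0 < 1 - u)]
  have hlower := neg_sub_two_mul_sq_le_log_one_sub hu
  rw [abs_le]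
  constructor <;> nlinarith [mul_le_mul_of_nonneg_left hupper hp,
    mul_le_mul_of_nonneg_left hlower hp, mul_nonneg (sub_nonneg.2 hpq) hu₀, sq_nonneg u]

theorem one_sub_rpow_le_exp {u p : ℝ} (hu : u ≤ 1) (hp : 0 ≤ p) :
    (1 - u) ^ p ≤ exp (-(p * u)) := by
  calc (1 - u) ^ p ≤ exp (-u) ^ p := rpow_le_rpow (by linarith) (one_sub_le_exp_neg u) hp
    _ = exp (-(p * u)) := by rw [← exp_mul]; ring_nf

theorem abs_exp_sub_exp_le {a b c : ℝ} (ha : a ≤ c) (hb : b ≤ c) :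
    |exp a - exp b| ≤ exp c * |a - b| := by
  wlog hba : b ≤ a generalizing a b
  · rw [abs_sub_comm, abs_sub_comm a]
    exact this hb ha (le_of_not_ge hba)
  have hexp : exp a - exp b ≤ exp a * (a - b) := by
    have := one_sub_le_exp_neg (a - b)
    rw [neg_sub, exp_sub] at this
    have hea := exp_pos a
    rw [le_div_iff₀ hea] at this
    nlinarith
  rw [abs_of_nonneg (sub_nonneg.2 (exp_le_exp.2 hba)), abs_of_nonneg (sub_nonneg.2 hba)]
  exact hexp.trans (mul_le_mul_of_nonneg_right (exp_le_exp.2 ha) (sub_nonneg.2 hba))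

theorem exp_neg_le_inv {a : ℝ} (ha : 0 < a) : exp (-a) ≤ a⁻¹ := by
  rw [exp_neg]
  exact inv_anti₀ ha (by linarith [add_one_le_exp a])

theorem sq_add_two_mul_le_exp {t : ℝ} (ht : 0 ≤ t) : t ^ 2 + 2 * t ≤ 144 * exp (t / 8) := by
  have h₁ := pow_div_factorial_le_exp (x := t / 8) (by positivity) 1
  have h₂ := pow_div_factorial_le_exp (x := t / 8) (by positivity) 2
  norm_num [Nat.factorial] at h₁ h₂
  linarith

end Real

theorem abs_mul_sub_mul_le {c d k g : ℝ} (hc₀ : 0 ≤ c) (hc₁ : c ≤ 1) (hcd : c ≤ d)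
    (hg : 0 ≤ g) :
    |c * k - d * g| ≤ |k - g| + (d - c) * g := by
  calc |c * k - d * g| = |c * (k - g) - (d - c) * g| := by ring_nf
    _ ≤ |c * (k - g)| + |(d - c) * g| := abs_sub _ _
    _ ≤ |k - g| + (d - c) * g := by
        rw [abs_mul, abs_of_nonneg hc₀, abs_of_nonneg (mul_nonneg (sub_nonneg.2 hcd) hg)]
        gcongr
        exact mul_le_of_le_one_left (abs_nonneg _) hc₁

noncomputable def sphereMarginalConst (N : ℝ) : ℝ :=
  Gamma (N / 2) / (√(π * N) * Gamma ((N - 1) / 2))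

noncomputable def sphereMarginalKernel (N x : ℝ) : ℝ :=
  if x ^ 2 < N then (1 - x ^ 2 / N) ^ ((N - 3) / 2) else 0

theorem sphereMarginalConst_pos {N : ℝ} (hN : 1 < N) : 0 < sphereMarginalConst N := by
  have hs : 0 < (N - 1) / 2 := by linarith
  unfold sphereMarginalConst
  positivity

theorem sphereMarginalConst_sq {N : ℝ} (hN : 0 < N) :
    sphereMarginalConst N ^ 2 = Gamma (N / 2) ^ 2 / (π * N * Gamma ((N - 1) / 2) ^ 2) := by
  rw [sphereMarginalConst, div_pow, mul_pow, sq_sqrt (by positivity)]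

theorem sphereMarginalConst_le {N : ℝ} (hN : 1 < N) :
    sphereMarginalConst N ≤ (√(2 * π))⁻¹ := by
  have hs : 0 < (N - 1) / 2 := by linarith
  have hgap := Gamma_add_half_sq_le hs
  rw [show (N - 1) / 2 + 1 / 2 = N / 2 by ring] at hgap
  rw [← pow_le_pow_iff_left₀ (sphereMarginalConst_pos hN).le (by positivity) two_ne_zero,
    sphereMarginalConst_sq (by linarith), inv_pow, sq_sqrt (by positivity),
    div_le_iff₀ (by positivity)]
  have hΓ : 0 < Gamma ((N - 1) / 2) := Gamma_pos_of_pos hs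
  field_simp
  nlinarith [pi_pos, sq_nonneg (Gamma ((N - 1) / 2))]

theorem one_sub_inv_mul_le_sphereMarginalConst {N : ℝ} (hN : 1 < N) :
    (1 - N⁻¹) * (√(2 * π))⁻¹ ≤ sphereMarginalConst N := by
  have hs : 0 < (N - 1) / 2 := by linarith
  have hgap := sq_mul_Gamma_sq_le_Gamma_add_half_sq hs
  rw [show (N - 1) / 2 + 1 / 2 = N / 2 by ring] at hgap
  have hN₀ : 0 < N := by linarith
  rw [← pow_le_pow_iff_left₀ (mul_nonneg (sub_nonneg.2 (inv_le_one_of_one_le₀ hN.le))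
      (by positivity)) (sphereMarginalConst_pos hN).le two_ne_zero,
    sphereMarginalConst_sq hN₀, mul_pow, inv_pow, sq_sqrt (by positivity),
    le_div_iff₀ (by positivity)]
  have hΓ : 0 < Gamma ((N - 1) / 2) := Gamma_pos_of_pos hs
  field_simp
  nlinarith [pi_pos, sq_nonneg (Gamma ((N - 1) / 2))]

theorem sphereMarginalKernel_nonneg (N x : ℝ) : 0 ≤ sphereMarginalKernel N x := by
  unfold sphereMarginalKernel
  split_ifs with hx
  · exact rpow_nonneg (by rw [sub_nonneg, div_le_one (by nlinarith)]; exact hx.le) _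
  · exact le_rfl

theorem sphereMarginalKernel_le_exp {N : ℝ} (hN : 3 ≤ N) (x : ℝ) :
    sphereMarginalKernel N x ≤ exp (-((N - 3) / (2 * N) * x ^ 2)) := by
  unfold sphereMarginalKernel
  split_ifs with hx
  · calc (1 - x ^ 2 / N) ^ ((N - 3) / 2)
        ≤ exp (-((N - 3) / 2 * (x ^ 2 / N))) :=
          one_sub_rpow_le_exp (by rw [div_le_one (by linarith)]; exact hx.le) (by linarith)
      _ = exp (-((N - 3) / (2 * N) * x ^ 2)) := by ring_nf
  · exact (exp_pos _).le

theorem abs_sphereMarginalKernel_sub_exp_le_of_sq_le_half {N x : ℝ} (hN : 6 ≤ N)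
    (hx : x ^ 2 ≤ N / 2) :
    |sphereMarginalKernel N x - exp (-x ^ 2 / 2)| ≤ 144 / N * exp (-x ^ 2 / 8) := by
  have hN₀ : 0 < N := by linarith
  set u := x ^ 2 / N with hu
  have hu₀ : 0 ≤ u := by positivity
  have hu₁ : u ≤ 1 / 2 := by rw [hu, div_le_iff₀ hN₀]; linarith
  have hxu : x ^ 2 = N * u := by rw [hu]; field_simp
  have hkernel : sphereMarginalKernel N x = exp (log (1 - u) * ((N - 3) / 2)) := by
    rw [sphereMarginalKernel, if_pos (by nlinarith), rpow_def_of_pos (by linarith)]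
  have hlog := abs_mul_log_one_sub_add_mul_le hu₀ hu₁ (by linarith : 0 ≤ (N - 3) / 2)
    (by linarith : (N - 3) / 2 ≤ N / 2)
  have hlog_le : log (1 - u) ≤ -u := by
    linarith [log_le_sub_one_of_pos (by linarith : 0 < 1 - u)]
  calc |sphereMarginalKernel N x - exp (-x ^ 2 / 2)|
      ≤ exp (-x ^ 2 / 4) * |log (1 - u) * ((N - 3) / 2) - (-x ^ 2 / 2)| := by
        rw [hkernel]
        refine abs_exp_sub_exp_le ?_ (by nlinarith)
        nlinarith [mul_le_mul_of_nonneg_left hlog_le (by linarith : 0 ≤ (N - 3) / 2)]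
    _ ≤ exp (-x ^ 2 / 4) * ((x ^ 4 + 2 * x ^ 2) / N) := by
        gcongr
        calc |log (1 - u) * ((N - 3) / 2) - (-x ^ 2 / 2)|
            = |(N - 3) / 2 * log (1 - u) + N / 2 * u| := by rw [hxu]; ring_nf
          _ ≤ (N / 2 - (N - 3) / 2) * u + 2 * (N / 2) * u ^ 2 := hlog
          _ ≤ (x ^ 4 + 2 * x ^ 2) / N := by
            rw [hu]; field_simp; nlinarith [sq_nonneg x]
    _ ≤ exp (-x ^ 2 / 4) * (144 * exp (x ^ 2 / 8) / N) := by
        gcongr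
        simpa [← pow_mul] using sq_add_two_mul_le_exp (sq_nonneg x)
    _ = 144 / N * exp (-x ^ 2 / 8) := by
        rw [show -x ^ 2 / 4 = -x ^ 2 / 8 + -(x ^ 2 / 8) by ring, exp_add, exp_neg]
        field_simp

theorem abs_sphereMarginalKernel_sub_exp_le {N : ℝ} (hN : 3 ≤ N) (x : ℝ) :
    |sphereMarginalKernel N x - exp (-x ^ 2 / 2)| ≤ 144 / N * exp (-x ^ 2 / 8) := by
  have hN₀ : 0 < N := by linarith
  have hK₀ := sphereMarginalKernel_nonneg N x
  have hK := sphereMarginalKernel_le_exp hN x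
  have hφ₀ := (exp_pos (-x ^ 2 / 2)).le
  rcases le_or_gt N (x ^ 2) with hxN | hxN
  · rw [sphereMarginalKernel, if_neg hxN.not_gt, zero_sub, abs_neg, abs_of_nonneg hφ₀]
    calc exp (-x ^ 2 / 2) = exp (-(3 * x ^ 2 / 8)) * exp (-x ^ 2 / 8) := by
          rw [← exp_add]; ring_nf
      _ ≤ (3 * N / 8)⁻¹ * exp (-x ^ 2 / 8) := by
          gcongr
          exact (exp_le_exp.2 (by linarith)).trans (exp_neg_le_inv (by positivity))
      _ ≤ 144 / N * exp (-x ^ 2 / 8) := by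
          gcongr
          rw [inv_div, div_le_div_iff₀ (by positivity) hN₀]
          linarith
  rcases lt_or_ge N 6 with hN₆ | hN₆
  · have hK₁ : sphereMarginalKernel N x ≤ 1 :=
      hK.trans (exp_le_one_iff.2 (by rw [neg_nonpos]; positivity))
    calc |sphereMarginalKernel N x - exp (-x ^ 2 / 2)| ≤ 1 :=
          abs_sub_le_of_nonneg_of_le hK₀ hK₁ hφ₀ (exp_le_one_iff.2 (by nlinarith))
      _ ≤ 144 / N * exp (-x ^ 2 / 8) := by
          have hC : 24 ≤ 144 / N := by rw [le_div_iff₀ hN₀]; linarith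
          have hdecay : 1 / 4 ≤ exp (-x ^ 2 / 8) := by linarith [add_one_le_exp (-x ^ 2 / 8)]
          nlinarith
  rcases le_or_gt (x ^ 2) (N / 2) with hx | hx
  · exact abs_sphereMarginalKernel_sub_exp_le_of_sq_le_half hN₆ hx
  · have hK₄ : sphereMarginalKernel N x ≤ exp (-x ^ 2 / 4) := by
      have hrate : 1 / 4 ≤ (N - 3) / (2 * N) := by rw [le_div_iff₀ (by positivity)]; linarith
      exact hK.trans (exp_le_exp.2 (by nlinarith [sq_nonneg x]))
    calc |sphereMarginalKernel N x - exp (-x ^ 2 / 2)| ≤ exp (-x ^ 2 / 4) :=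
          abs_sub_le_of_nonneg_of_le hK₀ hK₄ hφ₀ (exp_le_exp.2 (by nlinarith))
      _ = exp (-(x ^ 2 / 8)) * exp (-x ^ 2 / 8) := by rw [← exp_add]; ring_nf
      _ ≤ (N / 16)⁻¹ * exp (-x ^ 2 / 8) := by
          gcongr
          exact (exp_le_exp.2 (by linarith)).trans (exp_neg_le_inv (by positivity))
      _ ≤ 144 / N * exp (-x ^ 2 / 8) := by
          gcongr
          rw [inv_div]
          gcongr
          norm_num

theorem stmt8 :
    ∃ C : ℝ, 0 < C ∧
      ∀ n : ℕ, 3 ≤ n → ∀ x : ℝ,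
        |(if x ^ 2 < (n : ℝ) then
            Real.Gamma ((n : ℝ) / 2) /
                (Real.sqrt (Real.pi * n) * Real.Gamma (((n : ℝ) - 1) / 2)) *
              (1 - x ^ 2 / (n : ℝ)) ^ (((n : ℝ) - 3) / 2)
          else 0) -
            Real.exp (-(x ^ 2) / 2) / Real.sqrt (2 * Real.pi)| ≤
          C / n * Real.exp (-(x ^ 2) / 8) := by
  refine ⟨145, by norm_num, fun n hn x => ?_⟩
  have hN : (3 : ℝ) ≤ n := by exact_mod_cast hn
  have hc_le := sphereMarginalConst_le (N := n) (by linarith)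
  have hc_ge := one_sub_inv_mul_le_sphereMarginalConst (N := n) (by linarith)
  have hc_pos := sphereMarginalConst_pos (N := n) (by linarith)
  have hd_le : (√(2 * π))⁻¹ ≤ 1 :=
    inv_le_one_of_one_le₀ (one_le_sqrt.2 (by linarith [pi_gt_three]))
  have hgap : (√(2 * π))⁻¹ - sphereMarginalConst n ≤ (n : ℝ)⁻¹ := by
    linarith [mul_le_mul_of_nonneg_left hd_le (inv_nonneg.2 (Nat.cast_nonneg (α := ℝ) n))]
  calc _ = |sphereMarginalConst n * sphereMarginalKernel n x -
          (√(2 * π))⁻¹ * exp (-x ^ 2 / 2)| := by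
        rw [sphereMarginalKernel, mul_ite, mul_zero, sphereMarginalConst, ← div_eq_inv_mul]
    _ ≤ |sphereMarginalKernel n x - exp (-x ^ 2 / 2)| +
          ((√(2 * π))⁻¹ - sphereMarginalConst n) * exp (-x ^ 2 / 2) :=
        abs_mul_sub_mul_le hc_pos.le (hc_le.trans hd_le) hc_le (exp_pos _).le
    _ ≤ 144 / n * exp (-x ^ 2 / 8) + (n : ℝ)⁻¹ * exp (-x ^ 2 / 8) :=
        add_le_add (abs_sphereMarginalKernel_sub_exp_le hN x)
          (mul_le_mul hgap (exp_le_exp.2 (by nlinarith [sq_nonneg x])) (exp_pos _).le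
            (by positivity))
    _ = 145 / n * exp (-x ^ 2 / 8) := by ring
end

section
/- For every p ≥ 1 there is a constant c_p > 0 such that for any random vector X in R^n (n ≥ 2) with E|X|^2 = n, the characteristic function f of the typical distribution satisfies, for all t ∈ R, c_p |f(t)| ≤ (1 + σ_{2p}^p)/n^{p/2} + e^{−t^2/4}, and consequently for all T > 0, (c_p/T) ∫_0^T |f(t)| dt ≤ (1 + σ_{2p}^p)/n^{p/2} + 1/T. -/
open MeasureTheory ProbabilityTheory Real
open scoped RealInnerProductSpace NNReal ENNReal ProbabilityTheory

/-!
By rotation invariance `E_θ exp (i ⟪v, θ⟫) = φ ‖v‖`, where `φ s = E_θ cos (s θ₀)`, so by Fubini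
`f t = E φ (|t| ‖X‖)`. Differentiating under the integral sign shows that `φ` solves the Bessel-type
equation `φ'' + (n - 1) φ' / s + φ = 0` with `φ 0 = 1`, `φ' 0 = 0`. A Sturm comparison with the
Gaussians `exp (-α s²)` gives `0 < φ s ≤ exp (-s² / (2n))` on `[0, n/2]` and `|φ'| ≤ φ` at `n/2`;
beyond `n/2` the energy `φ² + φ'²` decreases, so `|φ| ≤ 2 exp (-n/8)` there. Hence
`|φ (|t| ‖X‖)| ≤ exp (-t²/4) + 2 exp (-n/8)` when `‖X‖² ≥ n/2`, while otherwise
`|φ| ≤ 1 ≤ 2ᵖ |‖X‖²/n - 1|ᵖ`. Taking expectations and using `exp (-n/8) = O_p(n^{-p/2})` gives the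
pointwise bound; integrating the Gaussian `exp (-t²/4)` over `[0, T]` gives the averaged one.
-/

theorem exists_linearIsometryEquiv_apply_eq {F : Type*} [NormedAddCommGroup F]
    [InnerProductSpace ℝ F] [CompleteSpace F] {v w : F} (h : ‖v‖ = ‖w‖) :
    ∃ T : F ≃ₗᵢ[ℝ] F, T v = w :=
  ⟨_, Submodule.reflection_sub h⟩

theorem hasDerivAt_integral_mul_comp_add_mul {α : Type*} [MeasurableSpace α] {μ : Measure α}
    [IsFiniteMeasure μ] {f f' : ℝ → ℝ} (hf : ∀ y, HasDerivAt f (f' y) y) (hf' : Measurable f')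
    (hf_le : ∀ y, |f y| ≤ 1) (hf'_le : ∀ y, |f' y| ≤ 1) {G L A : α → ℝ} (hG : Measurable G)
    (hL : Measurable L) (hA : Measurable A) (hG_le : ∀ᵐ a ∂μ, |G a| ≤ 1)
    (hA_le : ∀ᵐ a ∂μ, |A a| ≤ 1) (x₀ : ℝ) :
    HasDerivAt (fun x => ∫ a, G a * f (L a + x * A a) ∂μ)
      (∫ a, G a * A a * f' (L a + x₀ * A a) ∂μ) x₀ := by
  have hfm : Measurable f :=
    (continuous_iff_continuousAt.2 fun y => (hf y).continuousAt).measurable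
  refine (hasDerivAt_integral_of_dominated_loc_of_deriv_le (bound := fun _ => 1)
    (F' := fun x a => G a * A a * f' (L a + x * A a)) Filter.univ_mem
    (.of_forall fun x => by fun_prop) ?_ (by fun_prop) ?_ (integrable_const 1) ?_).2
  · refine .of_bound (by fun_prop) 1 ?_
    filter_upwards [hG_le] with a ha
    rw [Real.norm_eq_abs, abs_mul]
    exact mul_le_one₀ ha (abs_nonneg _) (hf_le _)
  · filter_upwards [hG_le, hA_le] with a hGa hAa x _
    rw [Real.norm_eq_abs, abs_mul, abs_mul]
    exact mul_le_one₀ (mul_le_one₀ hGa (abs_nonneg _) hAa) (abs_nonneg _) (hf'_le _)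
  · refine ae_of_all _ fun a x _ => ?_
    simpa [mul_comm, mul_left_comm, mul_assoc] using
      ((hf _).comp x (((hasDerivAt_id x).mul_const (A a)).const_add (L a))).const_mul (G a)

theorem exists_rpow_mul_exp_neg_le (q : ℝ) {a : ℝ} (ha : 0 < a) :
    ∃ B, 0 < B ∧ ∀ x : ℝ, 1 ≤ x → x ^ q * exp (-(a * x)) ≤ B := by
  refine ⟨(⌈q⌉₊).factorial / a ^ ⌈q⌉₊, by positivity, fun x hx => ?_⟩
  have hexp := pow_div_factorial_le_exp _ (mul_nonneg ha.le (zero_le_one.trans hx)) ⌈q⌉₊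
  rw [div_le_iff₀ (by positivity), mul_pow] at hexp
  calc x ^ q * exp (-(a * x)) ≤ x ^ ⌈q⌉₊ * exp (-(a * x)) := by
        gcongr
        exact_mod_cast rpow_le_rpow_of_exponent_le hx (Nat.le_ceil q)
    _ ≤ (⌈q⌉₊).factorial / a ^ ⌈q⌉₊ := by
        rw [le_div_iff₀ (by positivity), exp_neg]
        field_simp
        linarith

theorem one_add_rpow_div_rpow_half {x M p : ℝ} (hx : 0 < x) (hM : 0 ≤ M) (hp : p ≠ 0) :
    (1 + (√x * M ^ p⁻¹) ^ p) / x ^ (p / 2) = 1 / x ^ (p / 2) + M := by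
  rw [mul_rpow (sqrt_nonneg _) (rpow_nonneg hM _), ← rpow_mul hM, inv_mul_cancel₀ hp, rpow_one,
    sqrt_eq_rpow, ← rpow_mul hx.le, add_div, one_div_mul_eq_div, mul_div_cancel_left₀ _
      (rpow_pos_of_pos hx _).ne']

theorem intervalIntegral_le_of_le_add_exp {g : ℝ → ℝ} {R T : ℝ} (hT : 0 ≤ T)
    (hg0 : ∀ t, 0 ≤ g t) (hg : ∀ t, g t ≤ R + exp (-(t ^ 2) / 4)) :
    ∫ t in 0..T, g t ≤ R * T + 2 := by
  have he : Integrable fun t : ℝ => exp (-(t ^ 2) / 4) := by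
    convert integrable_exp_neg_mul_sq (b := 1 / 4) (by norm_num) using 3; ring
  have hgauss : ∫ t in Set.Ioi 0, exp (-(t ^ 2) / 4) ≤ 2 := by
    have : ∫ t in Set.Ioi 0, exp (-(t ^ 2) / 4) = √(π / (1 / 4)) / 2 := by
      rw [← integral_gaussian_Ioi]; congr! 3; ring
    rw [this, div_le_iff₀ two_pos, sqrt_le_left (by norm_num)]
    linarith [pi_le_four]
  have hR : IntegrableOn (fun _ => R) (Set.Ioc 0 T) := integrableOn_const measure_Ioc_lt_top.ne
  rw [intervalIntegral.integral_of_le hT]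
  calc ∫ t in Set.Ioc 0 T, g t ≤ ∫ t in Set.Ioc 0 T, (R + exp (-(t ^ 2) / 4)) :=
        integral_mono_of_nonneg (ae_of_all _ hg0) (hR.add he.integrableOn)
          (ae_of_all _ hg)
    _ = R * T + ∫ t in Set.Ioc 0 T, exp (-(t ^ 2) / 4) := by
        rw [integral_add hR he.integrableOn, setIntegral_const]
        simp [hT, mul_comm]
    _ ≤ R * T + 2 := by
        gcongr
        exact (setIntegral_mono_set he.integrableOn (ae_of_all _ fun _ => (exp_pos _).le)
          Set.Ioc_subset_Ioi_self.eventuallyLE).trans hgauss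

theorem le_add_exp_and_average_le {f : ℝ → ℝ} {K R : ℝ} (hK : 0 < K) (hR : 0 ≤ R)
    (hf0 : ∀ t, 0 ≤ f t) (hf : ∀ t, f t / K ≤ R + exp (-(t ^ 2) / 4)) :
    (∀ t, 1 / (2 * K) * f t ≤ R + exp (-(t ^ 2) / 4)) ∧
      ∀ T, 0 < T → 1 / (2 * K) / T * ∫ t in (0 : ℝ)..T, f t ≤ R + 1 / T := by
  constructor
  · intro t
    have := hf t
    calc 1 / (2 * K) * f t = (f t / K) / 2 := by field_simp
      _ ≤ R + exp (-(t ^ 2) / 4) := by linarith [exp_pos (-(t ^ 2) / 4)]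
  · intro T hT
    have h := intervalIntegral_le_of_le_add_exp hT.le (fun t => div_nonneg (hf0 t) hK.le) hf
    rw [intervalIntegral.integral_div] at h
    calc 1 / (2 * K) / T * ∫ t in (0 : ℝ)..T, f t
        = ((∫ t in (0 : ℝ)..T, f t) / K) / (2 * T) := by field_simp
      _ ≤ (R * T + 2) / (2 * T) := by gcongr
      _ ≤ R + 1 / T := by
        rw [div_le_iff₀ (by positivity)]
        field_simp
        nlinarith

section BesselComparison

variable {n : ℕ} [NeZero n] {φ φ' : ℝ → ℝ} (hφ : ∀ s, HasDerivAt φ (φ' s) s)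
  (hφ'_cont : Continuous φ')
  (hode : ∀ s, 0 < s → HasDerivAt φ' (-φ s - (n - 1) * φ' s / s) s)
include hφ hφ'_cont hode

omit hφ'_cont in
theorem hasDerivAt_wronskian (α : ℝ) {x : ℝ} (hx : 0 < x) :
    HasDerivAt (fun t => t ^ (n - 1) * exp (-(α * t ^ 2)) * (φ' t + 2 * α * t * φ t))
      (x ^ (n - 1) * exp (-(α * x ^ 2)) * φ x * (2 * α * n - 1 - 4 * α ^ 2 * x ^ 2)) x := by
  obtain ⟨m, rfl⟩ : ∃ m, n = m + 1 := ⟨n - 1, (Nat.succ_pred_eq_of_ne_zero NeZero.out).symm⟩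
  have hpow : (m : ℝ) * x ^ (m - 1) = m * x ^ m / x := by
    rcases m with _ | m
    · simp
    · field_simp; simp [pow_succ]
  have h := ((hasDerivAt_pow m x).mul ((hasDerivAt_pow 2 x).const_mul α).neg.exp).mul
    ((hode x hx).add (((hasDerivAt_id x).const_mul (2 * α)).mul (hφ x)))
  refine h.congr_deriv ?_
  simp only [Pi.mul_apply, Pi.add_apply, Pi.neg_apply, Nat.add_sub_cancel, hpow, Nat.cast_add,
    Nat.cast_one, id]
  field_simp
  ring

omit [NeZero n] hφ'_cont hode in
theorem hasDerivAt_mul_exp (α x : ℝ) :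
    HasDerivAt (fun t => φ t * exp (α * t ^ 2))
      (exp (α * x ^ 2) * (φ' x + 2 * α * x * φ x)) x :=
  ((hφ x).mul ((hasDerivAt_pow 2 x).const_mul α).exp).congr_deriv (by simp; ring)

-- `σ = 1` and `σ = -1` give the upper and the lower comparison with the Gaussian `exp (-α x²)`.
variable (hφ'0 : φ' 0 = 0) {σ α b : ℝ} (hpos : ∀ x ∈ Set.Ioo 0 b, 0 ≤ φ x)
  (hσ : ∀ x ∈ Set.Ioo 0 b, σ * (2 * α * n - 1 - 4 * α ^ 2 * x ^ 2) ≤ 0)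
include hφ'0 hpos hσ

theorem mul_deriv_add_le_zero : ∀ x ∈ Set.Icc 0 b, σ * (φ' x + 2 * α * x * φ x) ≤ 0 := by
  have hφ_cont : Continuous φ := continuous_iff_continuousAt.2 fun s => (hφ s).continuousAt
  set W := fun t => σ * (t ^ (n - 1) * exp (-(α * t ^ 2)) * (φ' t + 2 * α * t * φ t))
  have hW : AntitoneOn W (Set.Icc 0 b) := by
    refine antitoneOn_of_deriv_nonpos (convex_Icc 0 b) (by fun_prop) (fun x hx => ?_)
      fun x hx => ?_ <;> rw [interior_Icc] at hx <;>
      have h := (hasDerivAt_wronskian hφ hode α hx.1).const_mul σ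
    · exact h.differentiableAt.differentiableWithinAt
    · rw [h.deriv]
      have hA : 0 ≤ x ^ (n - 1) * exp (-(α * x ^ 2)) * φ x :=
        mul_nonneg (mul_pos (pow_pos hx.1 _) (exp_pos _)).le (hpos x hx)
      nlinarith [mul_nonpos_of_nonneg_of_nonpos hA (hσ x hx)]
  intro x hx
  rcases hx.1.eq_or_lt with rfl | hx0
  · simp [hφ'0]
  · have hWx := hW ⟨le_rfl, hx.1.trans hx.2⟩ hx hx.1
    have hA : 0 < x ^ (n - 1) * exp (-(α * x ^ 2)) := mul_pos (pow_pos hx0 _) (exp_pos _)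
    simp only [W] at hWx
    refine nonpos_of_mul_nonpos_right ?_ hA
    simpa [hφ'0, mul_left_comm σ] using hWx

theorem mul_le_mul_exp_neg (hφ0 : φ 0 = 1) :
    ∀ x ∈ Set.Icc 0 b, σ * φ x ≤ σ * exp (-(α * x ^ 2)) := by
  have hφ_cont : Continuous φ := continuous_iff_continuousAt.2 fun s => (hφ s).continuousAt
  have hg : AntitoneOn (fun t => σ * (φ t * exp (α * t ^ 2))) (Set.Icc 0 b) := by
    refine antitoneOn_of_deriv_nonpos (convex_Icc 0 b) (by fun_prop) (fun x hx => ?_)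
      fun x hx => ?_ <;> rw [interior_Icc] at hx <;>
      have h := (hasDerivAt_mul_exp hφ α x).const_mul σ
    · exact h.differentiableAt.differentiableWithinAt
    · rw [h.deriv, mul_left_comm]
      exact mul_nonpos_of_nonneg_of_nonpos (exp_pos _).le
        (mul_deriv_add_le_zero hφ hφ'_cont hode hφ'0 hpos hσ x (Set.Ioo_subset_Icc_self hx))
  intro x hx
  have h := hg ⟨le_rfl, hx.1.trans hx.2⟩ hx hx.1
  simp only [hφ0, pow_two, mul_zero, exp_zero, mul_one] at h
  calc σ * φ x = σ * (φ x * exp (α * x ^ 2)) * exp (-(α * x ^ 2)) := by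
        rw [mul_assoc, mul_assoc, ← exp_add]; simp
    _ ≤ σ * exp (-(α * x ^ 2)) := by gcongr; simpa [pow_two] using h

end BesselComparison

section BesselBounds

variable {n : ℕ} [NeZero n] {φ φ' : ℝ → ℝ} (hφ : ∀ s, HasDerivAt φ (φ' s) s)
  (hφ'_cont : Continuous φ')
  (hode : ∀ s, 0 < s → HasDerivAt φ' (-φ s - (n - 1) * φ' s / s) s)
  (hφ'0 : φ' 0 = 0) (hφ0 : φ 0 = 1)
include hφ hφ'_cont hode hφ'0 hφ0

theorem pos_of_mem_Icc_half : ∀ x ∈ Set.Icc (0 : ℝ) (n / 2), 0 < φ x := by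
  by_contra! h
  have hφ_cont : Continuous φ := continuous_iff_continuousAt.2 fun s => (hφ s).continuousAt
  set Z := Set.Icc (0 : ℝ) (n / 2) ∩ φ ⁻¹' Set.Iic 0
  have hZ : sInf Z ∈ Z := (isClosed_Icc.inter (isClosed_Iic.preimage hφ_cont)).csInf_mem
    h ⟨0, fun _ hx => hx.1.1⟩
  set b := sInf Z
  have hφb : φ b ≤ 0 := hZ.2
  have hb : 0 < b := hZ.1.1.lt_of_ne fun hb => by rw [← hb, hφ0] at hφb; norm_num at hφb
  -- `b` is the first zero of `φ`, and the lower comparison `exp (-x² / n) ≤ φ x` holds up to it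
  have hpos : ∀ x ∈ Set.Ioo 0 b, 0 ≤ φ x := fun x hx => by
    by_contra! hφx
    exact (csInf_le ⟨0, fun _ hx => hx.1.1⟩
      (show x ∈ Z from ⟨⟨hx.1.le, hx.2.le.trans hZ.1.2⟩, hφx.le⟩)).not_gt hx.2
  have hσ : ∀ x ∈ Set.Ioo 0 b, -1 * (2 * (1 / n) * n - 1 - 4 * (1 / n) ^ 2 * x ^ 2) ≤ 0 := by
    intro x hx
    have hn : (0 : ℝ) < n := Nat.cast_pos.2 (NeZero.pos n)
    have : x ^ 2 ≤ (n / 2) ^ 2 := pow_le_pow_left₀ hx.1.le (hx.2.le.trans hZ.1.2) 2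
    field_simp
    nlinarith
  have := mul_le_mul_exp_neg hφ hφ'_cont hode hφ'0 hpos hσ hφ0 b ⟨hb.le, le_rfl⟩
  linarith [exp_pos (-(1 / n * b ^ 2))]

theorem le_exp_of_mem_Icc_half : ∀ x ∈ Set.Icc (0 : ℝ) (n / 2), φ x ≤ exp (-(x ^ 2 / (2 * n))) := by
  have hn : (0 : ℝ) < n := Nat.cast_pos.2 (NeZero.pos n)
  intro x hx
  have h := mul_le_mul_exp_neg hφ hφ'_cont hode hφ'0 (σ := 1) (α := 1 / (2 * n))
    (fun y hy => (pos_of_mem_Icc_half hφ hφ'_cont hode hφ'0 hφ0 y (Set.Ioo_subset_Icc_self hy)).le)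
    (fun y _ => by field_simp; nlinarith) hφ0 x hx
  convert h using 3 <;> field_simp

theorem abs_deriv_half_le : |φ' (n / 2)| ≤ φ (n / 2) := by
  have hn : (0 : ℝ) < n := Nat.cast_pos.2 (NeZero.pos n)
  have hpos := pos_of_mem_Icc_half hφ hφ'_cont hode hφ'0 hφ0
  have hb : (n / 2 : ℝ) ∈ Set.Icc (0 : ℝ) (n / 2) := ⟨by positivity, le_rfl⟩
  have h1 := mul_deriv_add_le_zero hφ hφ'_cont hode hφ'0 (σ := 1) (α := 1 / (2 * n))
    (fun y hy => (hpos y (Set.Ioo_subset_Icc_self hy)).le) (fun y _ => by field_simp; nlinarith)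
    _ hb
  have h2 := mul_deriv_add_le_zero hφ hφ'_cont hode hφ'0 (σ := -1) (α := 1 / n)
    (fun y hy => (hpos y (Set.Ioo_subset_Icc_self hy)).le) (fun y hy => by
      have : y ^ 2 ≤ (n / 2) ^ 2 := pow_le_pow_left₀ hy.1.le hy.2.le 2
      field_simp; nlinarith) _ hb
  field_simp at h1 h2
  rw [abs_le]
  constructor <;> linarith [hpos _ hb]

omit hφ'0 hφ0 in
theorem sq_add_sq_antitoneOn : AntitoneOn (fun t => φ t ^ 2 + φ' t ^ 2) (Set.Ici 0) := by
  have hφ_cont : Continuous φ := continuous_iff_continuousAt.2 fun s => (hφ s).continuousAt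
  refine antitoneOn_of_deriv_nonpos (convex_Ici 0) (by fun_prop) (fun x hx => ?_)
    fun x hx => ?_ <;> rw [interior_Ici, Set.mem_Ioi] at hx <;>
    have h : HasDerivAt (fun t => φ t ^ 2 + φ' t ^ 2) (-(2 * (n - 1) * φ' x ^ 2 / x)) x :=
      (((hφ x).pow 2).add ((hode x hx).pow 2)).congr_deriv (by field_simp; ring)
  · exact h.differentiableAt.differentiableWithinAt
  · have hn : (1 : ℝ) ≤ n := Nat.one_le_cast.2 NeZero.one_le
    rw [h.deriv, neg_nonpos]
    exact div_nonneg (mul_nonneg (by linarith) (sq_nonneg _)) hx.le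

theorem abs_le_exp_add_exp {s : ℝ} (hs : 0 ≤ s) :
    |φ s| ≤ exp (-(s ^ 2 / (2 * n))) + 2 * exp (-(n / 8)) := by
  have hn : (0 : ℝ) < n := Nat.cast_pos.2 (NeZero.pos n)
  have hb : (n / 2 : ℝ) ∈ Set.Icc (0 : ℝ) (n / 2) := ⟨by positivity, le_rfl⟩
  rcases le_total s (n / 2) with hsb | hbs
  · rw [abs_of_pos (pos_of_mem_Icc_half hφ hφ'_cont hode hφ'0 hφ0 s ⟨hs, hsb⟩)]
    linarith [le_exp_of_mem_Icc_half hφ hφ'_cont hode hφ'0 hφ0 s ⟨hs, hsb⟩, exp_pos (-(n / 8 : ℝ))]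
  · -- past `n / 2` the energy `φ² + φ'²` only decreases, and at `n / 2` it is at most `2 φ²`
    have hE := sq_add_sq_antitoneOn hφ hφ'_cont hode hb.1 (hb.1.trans hbs) hbs
    have hφb : φ (n / 2) ≤ exp (-(n / 8)) := by
      convert le_exp_of_mem_Icc_half hφ hφ'_cont hode hφ'0 hφ0 _ hb using 2; field_simp; ring
    have hφ'b := sq_le_sq.2 ((abs_deriv_half_le hφ hφ'_cont hode hφ'0 hφ0).trans
      (le_abs_self _))
    have hφb2 := pow_le_pow_left₀ (pos_of_mem_Icc_half hφ hφ'_cont hode hφ'0 hφ0 _ hb).le hφb 2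
    have : |φ s| ≤ 2 * exp (-(n / 8)) :=
      abs_le_of_sq_le_sq (by nlinarith [sq_nonneg (φ' s)]) (by positivity)
    linarith [exp_pos (-(s ^ 2 / (2 * n)))]

end BesselBounds

noncomputable def sphericalCharFn {n : ℕ} [NeZero n] (μ : Measure (EuclideanSpace ℝ (Fin n)))
    (s : ℝ) : ℝ :=
  ∫ θ, cos (s * θ 0) ∂μ

noncomputable def sphericalCharFnDeriv {n : ℕ} [NeZero n] (μ : Measure (EuclideanSpace ℝ (Fin n)))
    (s : ℝ) : ℝ :=
  -∫ θ, θ 0 * sin (s * θ 0) ∂μ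

section Rotation

variable {n : ℕ} {μ : Measure (EuclideanSpace ℝ (Fin n))}
  (hinv : ∀ T : EuclideanSpace ℝ (Fin n) ≃ₗᵢ[ℝ] EuclideanSpace ℝ (Fin n), μ.map T = μ)
include hinv

theorem integral_comp_linearIsometryEquiv {G : Type*} [NormedAddCommGroup G] [NormedSpace ℝ G]
    (T : EuclideanSpace ℝ (Fin n) ≃ₗᵢ[ℝ] EuclideanSpace ℝ (Fin n))
    (F : EuclideanSpace ℝ (Fin n) → G) : ∫ θ, F (T θ) ∂μ = ∫ θ, F θ ∂μ :=
  (show MeasurePreserving T.toMeasurableEquiv μ μ from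
    ⟨T.continuous.measurable, hinv T⟩).integral_comp' F

theorem integral_comp_inner [NeZero n] {G : Type*} [NormedAddCommGroup G] [NormedSpace ℝ G]
    (F : ℝ → G) (v : EuclideanSpace ℝ (Fin n)) :
    ∫ θ, F ⟪v, θ⟫ ∂μ = ∫ θ, F (‖v‖ * θ 0) ∂μ := by
  obtain ⟨T, hT⟩ := exists_linearIsometryEquiv_apply_eq
    (v := ‖v‖ • EuclideanSpace.single (0 : Fin n) (1 : ℝ)) (w := v) (by simp [norm_smul])
  rw [← integral_comp_linearIsometryEquiv hinv T]
  refine integral_congr_ae (ae_of_all _ fun θ => congrArg F ?_)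
  conv_lhs => rw [← hT, LinearIsometryEquiv.inner_map_map, real_inner_smul_left,
    EuclideanSpace.inner_single_left]
  simp

theorem integral_sin_inner (v : EuclideanSpace ℝ (Fin n)) : ∫ θ, sin ⟪v, θ⟫ ∂μ = 0 := by
  have h := integral_comp_linearIsometryEquiv hinv (LinearIsometryEquiv.neg ℝ)
    (fun θ => sin ⟪v, θ⟫)
  simp only [LinearIsometryEquiv.coe_neg, inner_neg_right, sin_neg, integral_neg] at h
  linarith

theorem integral_cexp_inner [NeZero n] [IsFiniteMeasure μ] (v : EuclideanSpace ℝ (Fin n)) :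
    ∫ θ, Complex.exp (Complex.I * ⟪v, θ⟫) ∂μ = sphericalCharFn μ ‖v‖ := by
  simp_rw [mul_comm Complex.I, Complex.exp_mul_I, ← Complex.ofReal_cos, ← Complex.ofReal_sin]
  have hcos : Integrable (fun θ => ((cos ⟪v, θ⟫ : ℝ) : ℂ)) μ :=
    .of_bound (by fun_prop) 1 (ae_of_all _ fun θ => by
      rw [Complex.norm_real, Real.norm_eq_abs]; exact abs_cos_le_one _)
  have hsin : Integrable (fun θ => ((sin ⟪v, θ⟫ : ℝ) : ℂ) * Complex.I) μ :=
    .of_bound (by fun_prop) 1 (ae_of_all _ fun θ => by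
      rw [norm_mul, Complex.norm_I, mul_one, Complex.norm_real, Real.norm_eq_abs]
      exact abs_sin_le_one _)
  rw [integral_add hcos hsin, integral_mul_const, integral_complex_ofReal, integral_complex_ofReal,
    integral_sin_inner hinv, sphericalCharFn, ← integral_comp_inner hinv cos]
  simp

theorem typicalCharFn_eq_integral_sphericalCharFn [NeZero n] [IsFiniteMeasure μ] {Ω : Type}
    [MeasureSpace Ω] [IsFiniteMeasure (ℙ : Measure Ω)] {X : Ω → EuclideanSpace ℝ (Fin n)}
    (hX : Measurable X) (t : ℝ) :
    typicalCharFn X μ t = ∫ ω, (sphericalCharFn μ (|t| * ‖X ω‖) : ℂ) := by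
  have hint : Integrable (Function.uncurry fun θ ω =>
      Complex.exp (Complex.I * ((t * ⟪X ω, θ⟫ : ℝ) : ℂ))) (μ.prod ℙ) := by
    refine .of_bound ?_ 1 (ae_of_all _ fun q => ?_)
    · have : Measurable fun q : EuclideanSpace ℝ (Fin n) × Ω => ⟪X q.2, q.1⟫ := by fun_prop
      unfold Function.uncurry
      fun_prop
    · simp [Function.uncurry, Complex.norm_exp]
  simp only [typicalCharFn, weightedCharFn]
  rw [integral_integral_swap hint]
  refine integral_congr_ae (ae_of_all _ fun ω => ?_)
  simp only [← real_inner_smul_left]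
  rw [integral_cexp_inner hinv, norm_smul, Real.norm_eq_abs]

end Rotation

section Derivatives

variable {n : ℕ} [NeZero n] {μ : Measure (EuclideanSpace ℝ (Fin n))} [IsFiniteMeasure μ]
  (hsph : ∀ᵐ θ ∂μ, ‖θ‖ = 1)
include hsph

omit [NeZero n] [IsFiniteMeasure μ] in
theorem ae_abs_apply_le_one (j : Fin n) : ∀ᵐ θ ∂μ, |θ j| ≤ 1 := by
  filter_upwards [hsph] with θ hθ
  simpa [hθ] using PiLp.norm_apply_le θ j

theorem hasDerivAt_sphericalCharFn (s : ℝ) :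
    HasDerivAt (sphericalCharFn μ) (sphericalCharFnDeriv μ s) s := by
  have h := hasDerivAt_integral_mul_comp_add_mul (G := fun _ => 1) (L := fun _ => 0)
    (A := fun θ : EuclideanSpace ℝ (Fin n) => θ 0) hasDerivAt_cos (by fun_prop) abs_cos_le_one
    (by simpa using abs_sin_le_one) measurable_const measurable_const (by fun_prop)
    (by simp) (ae_abs_apply_le_one hsph 0) s
  simp only [one_mul, zero_add] at h
  exact h.congr_deriv (by simp [sphericalCharFnDeriv, integral_neg])

theorem hasDerivAt_sphericalCharFnDeriv (s : ℝ) :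
    HasDerivAt (sphericalCharFnDeriv μ) (-∫ θ, θ 0 ^ 2 * cos (s * θ 0) ∂μ) s := by
  have h := hasDerivAt_integral_mul_comp_add_mul (G := fun θ : EuclideanSpace ℝ (Fin n) => θ 0)
    (L := fun _ => 0) (A := fun θ => θ 0) hasDerivAt_sin (by fun_prop) abs_sin_le_one
    abs_cos_le_one (by fun_prop) measurable_const (by fun_prop) (ae_abs_apply_le_one hsph 0)
    (ae_abs_apply_le_one hsph 0) s
  simp only [zero_add] at h
  exact h.neg.congr_deriv (by simp [sq])

theorem continuous_sphericalCharFn : Continuous (sphericalCharFn μ) :=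
  continuous_iff_continuousAt.2 fun s => (hasDerivAt_sphericalCharFn hsph s).continuousAt

theorem continuous_sphericalCharFnDeriv : Continuous (sphericalCharFnDeriv μ) :=
  continuous_iff_continuousAt.2 fun s => (hasDerivAt_sphericalCharFnDeriv hsph s).continuousAt

end Derivatives

section Bessel

variable {n : ℕ} [NeZero n] {μ : Measure (EuclideanSpace ℝ (Fin n))} [IsFiniteMeasure μ]
  (hinv : ∀ T : EuclideanSpace ℝ (Fin n) ≃ₗᵢ[ℝ] EuclideanSpace ℝ (Fin n), μ.map T = μ)
  (hsph : ∀ᵐ θ ∂μ, ‖θ‖ = 1)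
include hinv hsph

-- By rotation invariance `∫ cos (s θ₀ + ε θⱼ) = φ (√(s² + ε²))`; compare the second
-- `ε`-derivatives of both sides at `ε = 0`.
theorem integral_apply_sq_mul_cos {j : Fin n} (hj : j ≠ 0) {s : ℝ} (hs : 0 < s) :
    ∫ θ, θ j ^ 2 * cos (s * θ 0) ∂μ = -(sphericalCharFnDeriv μ s / s) := by
  set r : ℝ → ℝ := fun ε => √(s ^ 2 + ε ^ 2)
  have hr_pos : ∀ ε, 0 < r ε := fun ε => by positivity
  have hr0 : r 0 = s := by simp [r, hs.le]
  have hr : ∀ ε, HasDerivAt r (ε / r ε) ε := fun ε =>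
    (((hasDerivAt_pow 2 ε).const_add (s ^ 2)).sqrt (by positivity)).congr_deriv (by
      simp only [r]; field_simp; norm_num)
  have hrad : (fun ε => ∫ θ, 1 * cos (s * θ 0 + ε * θ j) ∂μ) =
      fun ε => sphericalCharFn μ (r ε) := by
    ext ε
    have hnorm : ‖EuclideanSpace.single 0 s + EuclideanSpace.single j ε‖ = r ε := by
      rw [← sqrt_sq (norm_nonneg _), EuclideanSpace.real_norm_sq_eq,
        Finset.sum_eq_add_of_mem 0 j (Finset.mem_univ _) (Finset.mem_univ _) hj.symm]
      · simp [r, hj, hj.symm]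
      · intro i _ hi; simp [hi.1, hi.2]
    rw [← hnorm, sphericalCharFn, ← integral_comp_inner hinv]
    simp [inner_add_left, EuclideanSpace.inner_single_left]
  have hF : (fun ε => ∫ θ, θ j * sin (s * θ 0 + ε * θ j) ∂μ) =
      fun ε => -(sphericalCharFnDeriv μ (r ε) / r ε * ε) := by
    ext ε
    have h := (hasDerivAt_integral_mul_comp_add_mul (G := fun _ => 1) (L := fun θ => s * θ 0)
      (A := fun θ : EuclideanSpace ℝ (Fin n) => θ j) hasDerivAt_cos (by fun_prop)
      abs_cos_le_one (by simpa using abs_sin_le_one) measurable_const (by fun_prop)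
      (by fun_prop) (by simp) (ae_abs_apply_le_one hsph j) ε).unique
      (by rw [hrad]; exact (hasDerivAt_sphericalCharFn hsph (r ε)).comp ε (hr ε))
    simp only [one_mul, mul_neg, integral_neg] at h
    rw [← neg_eq_iff_eq_neg, h]
    ring
  have h1 := hasDerivAt_integral_mul_comp_add_mul (G := fun θ : EuclideanSpace ℝ (Fin n) => θ j)
    (L := fun θ => s * θ 0) (A := fun θ => θ j) hasDerivAt_sin (by fun_prop) abs_sin_le_one
    abs_cos_le_one (by fun_prop) (by fun_prop) (by fun_prop) (ae_abs_apply_le_one hsph j)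
    (ae_abs_apply_le_one hsph j) 0
  have h2 : HasDerivAt (fun ε => sphericalCharFnDeriv μ (r ε) / r ε * ε)
      (sphericalCharFnDeriv μ s / s) 0 :=
    ((((hasDerivAt_sphericalCharFnDeriv hsph (r 0)).comp 0 (hr 0)).div (hr 0)
      (hr_pos 0).ne').mul (hasDerivAt_id 0)).congr_deriv (by simp [hr0])
  rw [hF] at h1
  simpa [sq] using h1.unique h2.neg

theorem hasDerivAt_sphericalCharFnDeriv_of_pos {s : ℝ} (hs : 0 < s) :
    HasDerivAt (sphericalCharFnDeriv μ)
      (-sphericalCharFn μ s - (n - 1) * sphericalCharFnDeriv μ s / s) s := by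
  refine (hasDerivAt_sphericalCharFnDeriv hsph s).congr_deriv ?_
  have hint : ∀ j, Integrable (fun θ : EuclideanSpace ℝ (Fin n) => θ j ^ 2 * cos (s * θ 0)) μ :=
    fun j => .of_bound (by fun_prop) 1 <| by
      filter_upwards [ae_abs_apply_le_one hsph j] with θ h
      rw [norm_mul, norm_pow, Real.norm_eq_abs, Real.norm_eq_abs]
      exact mul_le_one₀ (pow_le_one₀ (abs_nonneg _) h) (abs_nonneg _) (abs_cos_le_one _)
  have hsplit : ∫ θ, θ 0 ^ 2 * cos (s * θ 0) ∂μ = sphericalCharFn μ s -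
      ∑ j ∈ Finset.univ.erase 0, ∫ θ, θ j ^ 2 * cos (s * θ 0) ∂μ := by
    rw [← integral_finsetSum _ fun j _ => hint j, sphericalCharFn,
      ← integral_sub (.of_bound (by fun_prop) 1 (ae_of_all _ fun _ => by simp [abs_cos_le_one]))
        (integrable_finsetSum _ fun j _ => hint j)]
    refine integral_congr_ae ?_
    filter_upwards [hsph] with θ hθ
    have h := EuclideanSpace.real_norm_sq_eq θ
    rw [hθ, ← Finset.add_sum_erase _ _ (Finset.mem_univ 0)] at h
    rw [← Finset.sum_mul]
    linear_combination -(cos (s * θ 0)) * h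
  rw [hsplit, Finset.sum_congr rfl fun j hj =>
      integral_apply_sq_mul_cos hinv hsph (Finset.ne_of_mem_erase hj) hs,
    Finset.sum_const, Finset.card_erase_of_mem (Finset.mem_univ _), Finset.card_univ,
    Fintype.card_fin, nsmul_eq_mul, Nat.cast_sub NeZero.one_le]
  ring

end Bessel

section UniformSphere

variable {n : ℕ} [NeZero n] {μ : Measure (EuclideanSpace ℝ (Fin n))}

omit [NeZero n] in
theorem IsUniformOnSphere.ae_norm_eq_one (hμ : IsUniformOnSphere μ) : ∀ᵐ θ ∂μ, ‖θ‖ = 1 := by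
  have := hμ.1
  have hs : MeasurableSet {θ : EuclideanSpace ℝ (Fin n) | ‖θ‖ = 1} :=
    measurableSet_eq_fun measurable_norm measurable_const
  rw [ae_iff_measure_eq hs.nullMeasurableSet, measure_univ]
  simpa [Metric.sphere, dist_zero_right] using hμ.2.1

theorem abs_sphericalCharFn_le_one [IsProbabilityMeasure μ] (s : ℝ) :
    |sphericalCharFn μ s| ≤ 1 := by
  simpa [sphericalCharFn] using norm_integral_le_of_norm_le_const (μ := μ) (C := 1)
    (f := fun θ => cos (s * θ 0)) (ae_of_all _ fun θ => by simpa using abs_cos_le_one _)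

theorem abs_sphericalCharFn_le (hμ : IsUniformOnSphere μ) {s : ℝ} (hs : 0 ≤ s) :
    |sphericalCharFn μ s| ≤ exp (-(s ^ 2 / (2 * n))) + 2 * exp (-(n / 8)) := by
  have := hμ.1
  have hsph := hμ.ae_norm_eq_one
  exact abs_le_exp_add_exp (hasDerivAt_sphericalCharFn hsph)
    (continuous_sphericalCharFnDeriv hsph)
    (fun s hs => hasDerivAt_sphericalCharFnDeriv_of_pos hμ.2.2 hsph hs)
    (by simp [sphericalCharFnDeriv]) (by simp [sphericalCharFn]) hs

theorem abs_sphericalCharFn_mul_le (hμ : IsUniformOnSphere μ) {p : ℝ} (hp : 0 < p) (t : ℝ)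
    {r : ℝ} (hr : 0 ≤ r) :
    |sphericalCharFn μ (|t| * r)| ≤
      2 ^ p * |r ^ 2 / n - 1| ^ p + 2 * exp (-(n / 8)) + exp (-(t ^ 2) / 4) := by
  have hn : (0 : ℝ) < n := Nat.cast_pos.2 (NeZero.pos n)
  have := hμ.1
  have hmom : 0 ≤ 2 ^ p * |r ^ 2 / n - 1| ^ p := by positivity
  rcases lt_or_ge (r ^ 2) (n / 2) with hr2 | hr2
  · -- far below the typical radius `√n` the trivial bound `1` is paid for by the moment term
    have : 1 ≤ 2 ^ p * |r ^ 2 / n - 1| ^ p := by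
      rw [← mul_rpow zero_le_two (abs_nonneg _)]
      refine one_le_rpow ?_ hp.le
      have : r ^ 2 / n < 1 / 2 := by rw [div_lt_iff₀ hn]; linarith
      rw [abs_sub_comm, abs_of_pos (by linarith)]
      linarith
    linarith [abs_sphericalCharFn_le_one (μ := μ) (|t| * r), exp_pos (-(n / 8 : ℝ)),
      exp_pos (-(t ^ 2) / 4)]
  · have hexp : exp (-((|t| * r) ^ 2 / (2 * n))) ≤ exp (-(t ^ 2) / 4) := by
      rw [exp_le_exp, mul_pow, sq_abs, neg_div, neg_le_neg_iff, div_le_div_iff₀ four_pos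
        (by positivity)]
      nlinarith [sq_nonneg t]
    linarith [abs_sphericalCharFn_le hμ (mul_nonneg (abs_nonneg t) hr)]

theorem norm_typicalCharFn_le (hμ : IsUniformOnSphere μ) {Ω : Type} [MeasureSpace Ω]
    [IsProbabilityMeasure (ℙ : Measure Ω)] {X : Ω → EuclideanSpace ℝ (Fin n)} (hX : Measurable X)
    {p : ℝ} (hp : 0 < p) (hint : Integrable fun ω => |‖X ω‖ ^ 2 / n - 1| ^ p) (t : ℝ) :
    ‖typicalCharFn X μ t‖ ≤
      2 ^ p * (∫ ω, |‖X ω‖ ^ 2 / n - 1| ^ p) + 2 * exp (-(n / 8)) + exp (-(t ^ 2) / 4) := by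
  have := hμ.1
  set C := 2 * exp (-(n / 8 : ℝ)) + exp (-(t ^ 2) / 4)
  rw [typicalCharFn_eq_integral_sphericalCharFn hμ.2.2 hX, add_assoc]
  calc ‖∫ ω, (sphericalCharFn μ (|t| * ‖X ω‖) : ℂ)‖
      ≤ ∫ ω, (2 ^ p * |‖X ω‖ ^ 2 / n - 1| ^ p + C) :=
        norm_integral_le_of_norm_le ((hint.const_mul _).add (integrable_const _))
          (ae_of_all _ fun ω => by
            rw [Complex.norm_real, Real.norm_eq_abs, ← add_assoc]
            exact abs_sphericalCharFn_mul_le hμ hp t (norm_nonneg _))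
    _ = 2 ^ p * (∫ ω, |‖X ω‖ ^ 2 / n - 1| ^ p) + C := by
        rw [integral_add (hint.const_mul _) (integrable_const _), integral_const_mul,
          integral_const]
        simp

end UniformSphere

theorem exists_norm_typicalCharFn_div_le {p : ℝ} (hp : 0 < p) :
    ∃ K, 0 < K ∧ ∀ (n : ℕ) [NeZero n] (Ω : Type) [MeasureSpace Ω]
      [IsProbabilityMeasure (ℙ : Measure Ω)] (X : Ω → EuclideanSpace ℝ (Fin n)), Measurable X →
      ∀ μ : Measure (EuclideanSpace ℝ (Fin n)), IsUniformOnSphere μ →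
      (Integrable fun ω => |‖X ω‖ ^ 2 / (n : ℝ) - 1| ^ p) → ∀ t : ℝ,
      ‖typicalCharFn X μ t‖ / K ≤
        1 / (n : ℝ) ^ (p / 2) + (∫ ω, |‖X ω‖ ^ 2 / (n : ℝ) - 1| ^ p) + exp (-(t ^ 2) / 4) := by
  obtain ⟨B, hB0, hB⟩ := exists_rpow_mul_exp_neg_le (p / 2) (a := 1 / 8) (by norm_num)
  refine ⟨2 ^ p + 2 * B + 1, by positivity, fun n _ Ω _ _ X hX μ hμ hint t => ?_⟩
  have hn : (1 : ℝ) ≤ n := Nat.one_le_cast.2 NeZero.one_le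
  set M := ∫ ω, |‖X ω‖ ^ 2 / (n : ℝ) - 1| ^ p
  set R := 1 / (n : ℝ) ^ (p / 2)
  have hM : 0 ≤ M := integral_nonneg fun _ => by positivity
  have hR : 0 ≤ R := by positivity
  have hdim : 2 * exp (-(n / 8)) ≤ 2 * B * R := by
    have := hB n hn
    rw [show -(1 / 8 * (n : ℝ)) = -(n / 8) by ring] at this
    rw [mul_one_div, le_div_iff₀ (by positivity)]
    linarith
  have he := exp_pos (-(t ^ 2) / 4)
  have h2p := rpow_nonneg zero_le_two p
  rw [div_le_iff₀ (by positivity)]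
  calc ‖typicalCharFn X μ t‖ ≤ 2 ^ p * M + 2 * exp (-(n / 8)) + exp (-(t ^ 2) / 4) :=
        norm_typicalCharFn_le hμ hX hp hint t
    _ ≤ (R + M + exp (-(t ^ 2) / 4)) * (2 ^ p + 2 * B + 1) := by
        nlinarith [mul_nonneg h2p hR, mul_nonneg hB0.le hM, mul_nonneg h2p he.le,
          mul_nonneg hB0.le he.le]

theorem stmt15 :
    ∀ p : ℝ, 1 ≤ p →
    ∃ c : ℝ, 0 < c ∧
      ∀ (n : ℕ), 2 ≤ n →
      ∀ (Ω : Type) [MeasureSpace Ω] [IsProbabilityMeasure (ℙ : Measure Ω)]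
        (X : Ω → EuclideanSpace ℝ (Fin n)), Measurable X →
      ∀ μ : Measure (EuclideanSpace ℝ (Fin n)), IsUniformOnSphere μ →
      (∫ ω, ‖X ω‖ ^ 2) = (n : ℝ) →
      (Integrable fun ω => |‖X ω‖ ^ 2 / (n : ℝ) - 1| ^ p) →
      (∀ t : ℝ,
        c * ‖typicalCharFn X μ t‖ ≤
          (1 + (Real.sqrt n * (∫ ω, |‖X ω‖ ^ 2 / (n : ℝ) - 1| ^ p) ^ p⁻¹) ^ p) /
            (n : ℝ) ^ (p / 2) + Real.exp (-(t ^ 2) / 4)) ∧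
      (∀ T : ℝ, 0 < T →
        c / T * ∫ t in (0 : ℝ)..T, ‖typicalCharFn X μ t‖ ≤
          (1 + (Real.sqrt n * (∫ ω, |‖X ω‖ ^ 2 / (n : ℝ) - 1| ^ p) ^ p⁻¹) ^ p) /
            (n : ℝ) ^ (p / 2) + 1 / T) := by
  intro p hp
  obtain ⟨K, hK, hbound⟩ := exists_norm_typicalCharFn_div_le (by linarith : 0 < p)
  refine ⟨1 / (2 * K), by positivity, fun n hn Ω _ _ X hX μ hμ _ hint => ?_⟩
  have : NeZero n := ⟨by omega⟩
  rw [one_add_rpow_div_rpow_half (by positivity) (integral_nonneg fun _ => by positivity)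
    (by positivity)]
  exact le_add_exp_and_average_le hK (by positivity) (fun _ => norm_nonneg _)
    (hbound n Ω X hX μ hμ hint)
end
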